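/- arXiv:0910.1228 — 2 statements merged into one kernel-verified Lean document; each statement's English description precedes it below -/
import Mathlib

section
/- Let $(X,d,\mu)$ be a doubling metric measure space with doubling constant $c_\mu$, let $f$ be a non-negative locally integrable function on $X$, fix a ball $B_0=B(x_0,R)$, and assume $\lambda_0 \ge \frac{1}{\mu(B_0)}\int_{11B_0} f\,d\mu$. Then there exists a countable (possibly finite) family of pairwise disjoint balls $\{B_i\}$ centered at points of $B_0$ with $5B_i\subset 11B_0$ such that: (i) $f(x)\le\lambda_0$ for $\mu$-a.e. $x\in B_0\setminus\bigcup_i 5B_i$; (ii) $\lambda_0 < \fint_{B_i} f\,d\mu \le c_\mu^3\lambda_0$ for every $i$; (iii) $c_\mu^{-3}\lambda_0 < \fint_{5B_i} f\,d\mu \le \lambda_0$ for every $i$. -/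
/-!
At almost every point `x ∈ B₀` with `f x > λ₀`, the Lebesgue differentiation theorem gives
arbitrarily small balls around `x` with average above `λ₀`, while every ball `B(x, s)` with
`2R ≤ s ≤ 10R` lies between `B₀` and `11B₀` and so has average at most `λ₀`. A radius `ρ` within a
factor `5` of the supremum of the radii with average above `λ₀` then satisfies
`λ₀ < ⨍_{B(x,ρ)} f` and `⨍_{B(x,5ρ)} f ≤ λ₀`, and doubling three times gives
`⨍_{B(x,ρ)} f ≤ cμ³ ⨍_{B(x,5ρ)} f`. The Vitali `5r`-covering lemma extracts from these balls a
disjoint subfamily whose fivefold enlargements cover the bad points; it is countable because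
disjoint balls of positive measure are countably many in a σ-finite space.
-/

open MeasureTheory Metric Set ENNReal

def IsDoubling {X : Type*} [MetricSpace X] [MeasurableSpace X]
    (μ : Measure X) (cμ : ℝ) : Prop :=
  (∀ (x : X) (r : ℝ), 0 < r → 0 < μ (Metric.ball x r) ∧ μ (Metric.ball x r) < ⊤) ∧
  ∀ (x : X) (r : ℝ), 0 < r → μ (Metric.ball x (2 * r)) ≤ ENNReal.ofReal cμ * μ (Metric.ball x r)

def IsCZBalls {X : Type*} [MetricSpace X] [MeasurableSpace X]
    (μ : Measure X) (cμ : ℝ) (g : X → ℝ) (x₀ : X) (R lam : ℝ)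
    (S : Set ℕ) (c : ℕ → X) (r : ℕ → ℝ) : Prop :=
  (∀ i ∈ S, 0 < r i) ∧
  (∀ i ∈ S, c i ∈ Metric.ball x₀ R) ∧
  (∀ i ∈ S, Metric.ball (c i) (5 * r i) ⊆ Metric.ball x₀ (11 * R)) ∧
  (S.PairwiseDisjoint fun i => Metric.ball (c i) (r i)) ∧
  (∀ᵐ x ∂μ, x ∈ Metric.ball x₀ R \ (⋃ i ∈ S, Metric.ball (c i) (5 * r i)) → g x ≤ lam) ∧
  (∀ i ∈ S, lam < ⨍ x in Metric.ball (c i) (r i), g x ∂μ ∧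
      ⨍ x in Metric.ball (c i) (r i), g x ∂μ ≤ cμ ^ 3 * lam) ∧
  (∀ i ∈ S, lam / cμ ^ 3 < ⨍ x in Metric.ball (c i) (5 * r i), g x ∂μ ∧
      ⨍ x in Metric.ball (c i) (5 * r i), g x ∂μ ≤ lam)

open Filter Topology

namespace IsDoubling

variable {X : Type*} [MetricSpace X] [MeasurableSpace X] {μ : Measure X} {cμ : ℝ}

theorem measure_ball_pos (hd : IsDoubling μ cμ) (x : X) {r : ℝ} (hr : 0 < r) :
    0 < μ (ball x r) :=
  (hd.1 x r hr).1

theorem measure_ball_lt_top (hd : IsDoubling μ cμ) (x : X) (r : ℝ) : μ (ball x r) < ∞ := by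
  rcases le_or_gt r 0 with hr | hr
  · simp [ball_eq_empty.2 hr]
  · exact (hd.1 x r hr).2

theorem one_le (hd : IsDoubling μ cμ) (x : X) : 1 ≤ cμ := by
  have hpos := hd.measure_ball_pos x one_pos
  have hle : 1 * μ (ball x 1) ≤ ENNReal.ofReal cμ * μ (ball x 1) := by
    rw [one_mul]
    calc μ (ball x 1) ≤ μ (ball x (2 * 1)) := measure_mono (ball_subset_ball (by norm_num))
      _ ≤ ENNReal.ofReal cμ * μ (ball x 1) := hd.2 x 1 one_pos
  exact ENNReal.one_le_ofReal.1
    ((ENNReal.mul_le_mul_iff_left hpos.ne' (hd.measure_ball_lt_top x 1).ne).1 hle)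

theorem measure_ball_two_pow_mul_le (hd : IsDoubling μ cμ) (x : X) {r : ℝ} (hr : 0 < r)
    (k : ℕ) : μ (ball x (2 ^ k * r)) ≤ ENNReal.ofReal cμ ^ k * μ (ball x r) := by
  induction k with
  | zero => simp
  | succ k ih =>
    calc μ (ball x (2 ^ (k + 1) * r)) = μ (ball x (2 * (2 ^ k * r))) := by ring_nf
      _ ≤ ENNReal.ofReal cμ * μ (ball x (2 ^ k * r)) := hd.2 x _ (by positivity)
      _ ≤ ENNReal.ofReal cμ * (ENNReal.ofReal cμ ^ k * μ (ball x r)) := by gcongr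
      _ = ENNReal.ofReal cμ ^ (k + 1) * μ (ball x r) := by ring

theorem measure_ball_five_mul_le (hd : IsDoubling μ cμ) (x : X) {r : ℝ} (hr : 0 < r) :
    μ (ball x (5 * r)) ≤ ENNReal.ofReal cμ ^ 3 * μ (ball x r) :=
  calc μ (ball x (5 * r)) ≤ μ (ball x (2 ^ 3 * r)) := measure_mono (ball_subset_ball (by linarith))
    _ ≤ ENNReal.ofReal cμ ^ 3 * μ (ball x r) := hd.measure_ball_two_pow_mul_le x hr 3

theorem sigmaFinite [Nonempty X] (hd : IsDoubling μ cμ) : SigmaFinite μ := by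
  let x : X := Classical.arbitrary X
  refine Measure.sigmaFinite_of_countable (countable_range fun n : ℕ => ball x n) ?_ ?_
  · rintro - ⟨n, rfl⟩
    exact hd.measure_ball_lt_top x n
  · rw [sUnion_range, iUnion_ball_nat]

theorem isLocallyFiniteMeasure (hd : IsDoubling μ cμ) : IsLocallyFiniteMeasure μ :=
  ⟨fun x => ⟨ball x 1, ball_mem_nhds x one_pos, hd.measure_ball_lt_top x 1⟩⟩

theorem isUnifLocDoublingMeasure (hd : IsDoubling μ cμ) : IsUnifLocDoublingMeasure μ := by
  refine ⟨⟨cμ.toNNReal ^ 2, ?_⟩⟩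
  filter_upwards [self_mem_nhdsWithin] with ε (hε : 0 < ε) x
  calc μ (closedBall x (2 * ε)) ≤ μ (ball x (2 ^ 2 * ε)) :=
        measure_mono (closedBall_subset_ball (by linarith))
    _ ≤ ENNReal.ofReal cμ ^ 2 * μ (ball x ε) := hd.measure_ball_two_pow_mul_le x hε 2
    _ ≤ ↑(cμ.toNNReal ^ 2) * μ (closedBall x ε) := by
        rw [ENNReal.coe_pow]
        exact mul_le_mul_right (measure_mono ball_subset_closedBall) _

end IsDoubling

section Average

variable {X : Type*} [MeasurableSpace X] {μ : Measure X} {f : X → ℝ}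

theorem setAverage_nonneg_of_nonneg (hf0 : ∀ x, 0 ≤ f x) (s : Set X) :
    0 ≤ ⨍ x in s, f x ∂μ := by
  rw [setAverage_eq, smul_eq_mul]
  exact mul_nonneg (inv_nonneg.2 measureReal_nonneg) (integral_nonneg hf0)

theorem setAverage_le_inv_mul_setIntegral (hf0 : ∀ x, 0 ≤ f x) {s t u : Set X}
    (hft : IntegrableOn f t μ) (hst : s ⊆ t) (hus : μ u ≤ μ s) (hu : 0 < μ u)
    (hs : μ s ≠ ∞) : ⨍ x in s, f x ∂μ ≤ (μ.real u)⁻¹ * ∫ x in t, f x ∂μ := by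
  rw [setAverage_eq, smul_eq_mul]
  have hu_real : 0 < μ.real u := ENNReal.toReal_pos hu.ne' (ne_top_of_le_ne_top hs hus)
  exact mul_le_mul (inv_anti₀ hu_real (ENNReal.toReal_mono hs hus))
    (setIntegral_mono_set hft (.of_forall hf0) hst.eventuallyLE) (integral_nonneg hf0)
    (inv_nonneg.2 hu_real.le)

end Average

section Limits

variable {X : Type*} [MetricSpace X] [MeasurableSpace X] [OpensMeasurableSpace X]
  {μ : Measure X} {f : X → ℝ}

theorem tendsto_measure_ball_nhdsGT (ν : Measure X) (x : X) {t r : ℝ} (htr : t < r)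
    (hr : ν (ball x r) ≠ ∞) :
    Tendsto (fun s => ν (ball x s)) (𝓝[>] t) (𝓝 (ν (closedBall x t))) := by
  rw [← biInter_gt_ball]
  exact tendsto_measure_biInter_gt (fun _ _ => measurableSet_ball.nullMeasurableSet)
    (fun _ _ _ h => ball_subset_ball h) ⟨r, htr, hr⟩

theorem tendsto_setIntegral_ball_nhdsGT (hf0 : ∀ x, 0 ≤ f x) (x : X) {t r : ℝ} (htr : t < r)
    (hf : IntegrableOn f (ball x r) μ) :
    Tendsto (fun s => ∫ y in ball x s, f y ∂μ) (𝓝[>] t)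
      (𝓝 (∫ y in closedBall x t, f y ∂μ)) := by
  set ν := μ.withDensity fun y => ENNReal.ofReal (f y)
  -- Integrals of `f ≥ 0` are `ν`-measures, so continuity from above of `ν` applies.
  have hν : ∀ s, MeasurableSet s → s ⊆ ball x r → ∫ y in s, f y ∂μ = (ν s).toReal :=
    fun s hs hsr => by
      rw [withDensity_apply _ hs, integral_eq_lintegral_of_nonneg_ae (.of_forall hf0)
        (hf.mono_set hsr).aestronglyMeasurable]
  have hνr : ν (ball x r) ≠ ∞ := by
    rw [withDensity_apply _ measurableSet_ball]
    exact hf.setLIntegral_lt_top.ne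
  rw [hν _ isClosed_closedBall.measurableSet (closedBall_subset_ball htr)]
  refine ((ENNReal.tendsto_toReal ?_).comp (tendsto_measure_ball_nhdsGT ν x htr hνr)).congr' ?_
  · exact ne_top_of_le_ne_top hνr (measure_mono (closedBall_subset_ball htr))
  · filter_upwards [Ioo_mem_nhdsGT htr] with s hs
    exact (hν _ measurableSet_ball (ball_subset_ball hs.2.le)).symm

theorem tendsto_setAverage_ball_nhdsGT (hf0 : ∀ x, 0 ≤ f x) (x : X) {t r : ℝ} (htr : t < r)
    (hf : IntegrableOn f (ball x r) μ) (hr : μ (ball x r) ≠ ∞) (ht : μ (closedBall x t) ≠ 0) :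
    Tendsto (fun s => ⨍ y in ball x s, f y ∂μ) (𝓝[>] t)
      (𝓝 (⨍ y in closedBall x t, f y ∂μ)) := by
  have ht_fin : μ (closedBall x t) ≠ ∞ :=
    ne_top_of_le_ne_top hr (measure_mono (closedBall_subset_ball htr))
  have hmeas : Tendsto (fun s => μ.real (ball x s)) (𝓝[>] t) (𝓝 (μ.real (closedBall x t))) :=
    (ENNReal.tendsto_toReal ht_fin).comp (tendsto_measure_ball_nhdsGT μ x htr hr)
  simp only [setAverage_eq, smul_eq_mul]
  exact (hmeas.inv₀ (ENNReal.toReal_pos ht ht_fin).ne').mul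
    (tendsto_setIntegral_ball_nhdsGT hf0 x htr hf)

end Limits

section Covering

variable {X : Type*} [MetricSpace X] [MeasurableSpace X] [OpensMeasurableSpace X]
  {μ : Measure X} [SFinite μ]

theorem countable_of_pairwiseDisjoint_ball (hμ : ∀ (x : X) {r : ℝ}, 0 < r → 0 < μ (ball x r))
    {u : Set X} {r : X → ℝ} (hr : ∀ a ∈ u, 0 < r a)
    (hu : u.PairwiseDisjoint fun a => ball a (r a)) : u.Countable := by
  have hdisj : Pairwise (Function.onFun Disjoint fun a : u => ball (a : X) (r a)) :=
    fun a b hab => hu a.2 b.2 (Subtype.coe_ne_coe.2 hab)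
  have hcount := Measure.countable_meas_pos_of_disjoint_iUnion (μ := μ)
    (fun _ => measurableSet_ball) hdisj
  rw [eq_univ_of_forall (s := {a : u | 0 < μ (ball a (r a))}) fun a => hμ a (hr a a.2),
    countable_univ_iff] at hcount
  exact countable_coe_iff.1 hcount

theorem exists_countable_pairwiseDisjoint_ball_subset_ball_five_mul
    (hμ : ∀ (x : X) {r : ℝ}, 0 < r → 0 < μ (ball x r)) (t : Set X) (r : X → ℝ)
    (hr : ∀ a ∈ t, 0 < r a) (R : ℝ) (hrR : ∀ a ∈ t, r a ≤ R) :
    ∃ u ⊆ t, u.Countable ∧ u.PairwiseDisjoint (fun a => ball a (r a)) ∧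
      ∀ a ∈ t, ∃ b ∈ u, ball a (r a) ⊆ ball b (5 * r b) := by
  obtain ⟨u, hut, hdisj, hcov⟩ := Vitali.exists_disjoint_subfamily_covering_enlargement
    (fun a => ball a (r a)) t r 2 one_lt_two (fun a ha => (hr a ha).le) R hrR
    (fun a ha => ⟨a, mem_ball_self (hr a ha)⟩)
  refine ⟨u, hut, countable_of_pairwiseDisjoint_ball hμ (fun a ha => hr a (hut ha)) hdisj,
    hdisj, fun a ha => ?_⟩
  obtain ⟨b, hbu, ⟨z, hza, hzb⟩, hab⟩ := hcov a ha
  refine ⟨b, hbu, ball_subset_ball' ?_⟩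
  linarith [dist_triangle a z b, mem_ball'.1 hza, mem_ball.1 hzb]

theorem secondCountableTopology_of_measure_ball_pos
    (hμ : ∀ (x : X) {r : ℝ}, 0 < r → 0 < μ (ball x r)) : SecondCountableTopology X := by
  refine secondCountable_of_almost_dense_set fun ε hε => ?_
  obtain ⟨u, -, hu, -, hcov⟩ := exists_countable_pairwiseDisjoint_ball_subset_ball_five_mul hμ
    univ (fun _ => ε / 5) (fun _ _ => by positivity) (ε / 5) (fun _ _ => le_rfl)
  refine ⟨u, hu, fun x => ?_⟩
  obtain ⟨b, hbu, hxb⟩ := hcov x (mem_univ x)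
  refine ⟨b, hbu, le_of_lt ?_⟩
  simpa [mul_div_cancel₀] using hxb (mem_ball_self (by positivity : 0 < ε / 5))

end Covering

theorem Set.Countable.exists_injOn_image_eq_nat {α : Type*} [Nonempty α] {u : Set α}
    (hu : u.Countable) : ∃ (S : Set ℕ) (c : ℕ → α), S.InjOn c ∧ c '' S = u := by
  have := hu.to_subtype
  obtain ⟨e, he⟩ := Countable.exists_injective_nat u
  let c : ℕ → α := Function.extend e Subtype.val fun _ => Classical.arbitrary α
  have hce : ∀ a, c (e a) = a := he.extend_apply _ _
  refine ⟨range e, c, ?_, ?_⟩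
  · rintro - ⟨a, rfl⟩ - ⟨b, rfl⟩ hab
    rw [hce, hce] at hab
    rw [Subtype.ext hab]
  · rw [← range_comp, show c ∘ e = Subtype.val from funext hce, Subtype.range_coe]

theorem exists_lt_apply_and_apply_five_mul_le {φ : ℝ → ℝ} {lam a t : ℝ} (ht : 0 < t)
    (hta : t ≤ a) (hφt : lam < φ t) (hφ : ∀ s, a ≤ s → s ≤ 5 * a → φ s ≤ lam) :
    ∃ ρ, 0 < ρ ∧ ρ ≤ a ∧ lam < φ ρ ∧ φ (5 * ρ) ≤ lam := by
  set T := {s | 0 < s ∧ s ≤ 5 * a ∧ lam < φ s}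
  have hTa : ∀ s ∈ T, s ≤ a := fun s hs =>
    le_of_not_gt fun has => (hs.2.2.not_ge (hφ s has.le hs.2.1)).elim
  have hbdd : BddAbove T := ⟨a, hTa⟩
  have htT : t ∈ T := ⟨ht, by linarith, hφt⟩
  have hsup : 0 < sSup T := ht.trans_le (le_csSup hbdd htT)
  -- `ρ ∈ T` beyond `sSup T / 5`, so `5ρ` exceeds `sSup T` and cannot lie in `T`.
  obtain ⟨ρ, hρT, hρ⟩ := exists_lt_of_lt_csSup ⟨t, htT⟩ (by linarith : sSup T / 5 < sSup T)
  refine ⟨ρ, hρT.1, hTa ρ hρT, hρT.2.2, le_of_not_gt fun h5ρ => ?_⟩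
  have := le_csSup hbdd ⟨by linarith [hρT.1], by linarith [hTa ρ hρT], h5ρ⟩
  linarith

section StoppingRadius

variable {X : Type*} [MetricSpace X] [MeasurableSpace X] {μ : Measure X} {cμ : ℝ} {f : X → ℝ}

def IsStoppingRadius (μ : Measure X) (f : X → ℝ) (lam a : ℝ) (x : X) (ρ : ℝ) : Prop :=
  0 < ρ ∧ ρ ≤ a ∧ lam < ⨍ y in ball x ρ, f y ∂μ ∧ ⨍ y in ball x (5 * ρ), f y ∂μ ≤ lam

namespace IsDoubling

theorem setAverage_ball_le_mul_setAverage_five_mul (hd : IsDoubling μ cμ) (hf0 : ∀ x, 0 ≤ f x)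
    (x : X) {r : ℝ} (hr : 0 < r) (hf : IntegrableOn f (ball x (5 * r)) μ) :
    ⨍ y in ball x r, f y ∂μ ≤ cμ ^ 3 * ⨍ y in ball x (5 * r), f y ∂μ := by
  have hB : 0 < μ.real (ball x r) :=
    ENNReal.toReal_pos (hd.measure_ball_pos x hr).ne' (hd.measure_ball_lt_top x r).ne
  have h5B : μ.real (ball x (5 * r)) ≤ cμ ^ 3 * μ.real (ball x r) := by
    have := ENNReal.toReal_mono
      (by finiteness [hd.measure_ball_lt_top x r]) (hd.measure_ball_five_mul_le x hr)
    rwa [ENNReal.toReal_mul, ENNReal.toReal_pow,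
      ENNReal.toReal_ofReal (zero_le_one.trans (hd.one_le x))] at this
  calc ⨍ y in ball x r, f y ∂μ ≤ (μ.real (ball x r))⁻¹ * ∫ y in ball x (5 * r), f y ∂μ :=
        setAverage_le_inv_mul_setIntegral hf0 hf (ball_subset_ball (by linarith)) le_rfl
          (hd.measure_ball_pos x hr) (hd.measure_ball_lt_top x r).ne
    _ = μ.real (ball x (5 * r)) / μ.real (ball x r) * ⨍ y in ball x (5 * r), f y ∂μ := by
        have : 0 < μ.real (ball x (5 * r)) := ENNReal.toReal_pos
          (hd.measure_ball_pos x (by linarith)).ne' (hd.measure_ball_lt_top x _).ne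
        rw [setAverage_eq, smul_eq_mul]
        field_simp
    _ ≤ cμ ^ 3 * ⨍ y in ball x (5 * r), f y ∂μ :=
        mul_le_mul_of_nonneg_right ((div_le_iff₀ hB).2 h5B) (setAverage_nonneg_of_nonneg hf0 _)

theorem setAverage_ball_le_of_mem_ball (hd : IsDoubling μ cμ) (hf0 : ∀ x, 0 ≤ f x) {x₀ y : X}
    {R lam s : ℝ} (hf : IntegrableOn f (ball x₀ (11 * R)) μ)
    (hlam : (μ (ball x₀ R)).toReal⁻¹ * ∫ x in ball x₀ (11 * R), f x ∂μ ≤ lam)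
    (hy : y ∈ ball x₀ R) (h2R : 2 * R ≤ s) (h10R : s ≤ 10 * R) :
    ⨍ x in ball y s, f x ∂μ ≤ lam := by
  have hy' := mem_ball.1 hy
  have hR : 0 < R := dist_nonneg.trans_lt hy'
  refine le_trans ?_ hlam
  refine setAverage_le_inv_mul_setIntegral hf0 hf (ball_subset_ball' (by linarith))
    (measure_mono (ball_subset_ball' ?_)) (hd.measure_ball_pos x₀ hR)
    (hd.measure_ball_lt_top y s).ne
  linarith [dist_comm x₀ y]

theorem ae_exists_lt_setAverage_ball [BorelSpace X] [SecondCountableTopology X]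
    (hd : IsDoubling μ cμ) (hf0 : ∀ x, 0 ≤ f x)
    (hf : ∀ (x : X) (r : ℝ), IntegrableOn f (ball x r) μ) :
    ∀ᵐ x ∂μ, ∀ lam < f x, ∀ ε > 0, ∃ s, 0 < s ∧ s ≤ ε ∧ lam < ⨍ y in ball x s, f y ∂μ := by
  have := hd.isLocallyFiniteMeasure
  have := hd.isUnifLocDoublingMeasure
  have hfloc : LocallyIntegrable f μ := fun x => ⟨ball x 1, ball_mem_nhds x one_pos, hf x 1⟩
  filter_upwards [IsUnifLocDoublingMeasure.ae_tendsto_average μ hfloc 1]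
    with x hx lam hlam ε hε
  have hclosed : Tendsto (fun δ => ⨍ y in closedBall x δ, f y ∂μ) (𝓝[>] 0) (𝓝 (f x)) :=
    hx (fun _ => x) id tendsto_id (eventually_mem_nhdsWithin.mono fun δ (hδ : 0 < δ) => by
      simpa using hδ.le)
  obtain ⟨δ, hδlam, hδ0, hδε⟩ :=
    ((hclosed.eventually (lt_mem_nhds hlam)).and (Ioo_mem_nhdsGT (half_pos hε))).exists
  have hopen := tendsto_setAverage_ball_nhdsGT hf0 x (lt_two_mul_self hδ0) (hf x (2 * δ))
    (hd.measure_ball_lt_top x _).ne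
    ((hd.measure_ball_pos x hδ0).trans_le (measure_mono ball_subset_closedBall)).ne'
  obtain ⟨s, hslam, hδs, hs2δ⟩ :=
    ((hopen.eventually (lt_mem_nhds hδlam)).and (Ioo_mem_nhdsGT (lt_two_mul_self hδ0))).exists
  exact ⟨s, hδ0.trans hδs, by linarith, hslam⟩

theorem ae_exists_isStoppingRadius [BorelSpace X] [SecondCountableTopology X]
    (hd : IsDoubling μ cμ) (hf0 : ∀ x, 0 ≤ f x)
    (hf : ∀ (x : X) (r : ℝ), IntegrableOn f (ball x r) μ) {x₀ : X} {R lam : ℝ}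
    (hlam : (μ (ball x₀ R)).toReal⁻¹ * ∫ x in ball x₀ (11 * R), f x ∂μ ≤ lam) :
    ∀ᵐ x ∂μ, x ∈ ball x₀ R → lam < f x → ∃ ρ, IsStoppingRadius μ f lam (2 * R) x ρ := by
  filter_upwards [hd.ae_exists_lt_setAverage_ball hf0 hf] with x hx hxB hlt
  obtain ⟨t, ht0, ht, htlam⟩ := hx lam hlt (2 * R) (by linarith [dist_nonneg.trans_lt hxB])
  exact exists_lt_apply_and_apply_five_mul_le ht0 ht htlam fun s h2R h10R =>
    hd.setAverage_ball_le_of_mem_ball hf0 (hf x₀ (11 * R)) hlam hxB h2R (by linarith)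

end IsDoubling

theorem IsStoppingRadius.setAverage_bounds {lam a ρ : ℝ} {x : X}
    (h : IsStoppingRadius μ f lam a x ρ) (hd : IsDoubling μ cμ) (hf0 : ∀ x, 0 ≤ f x)
    (hf : IntegrableOn f (ball x (5 * ρ)) μ) :
    (lam < ⨍ y in ball x ρ, f y ∂μ ∧ ⨍ y in ball x ρ, f y ∂μ ≤ cμ ^ 3 * lam) ∧
      (lam / cμ ^ 3 < ⨍ y in ball x (5 * ρ), f y ∂μ ∧ ⨍ y in ball x (5 * ρ), f y ∂μ ≤ lam) := by
  obtain ⟨hρ, -, hB, h5B⟩ := h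
  have hc : 0 < cμ ^ 3 := pow_pos (one_pos.trans_le (hd.one_le x)) 3
  have hcomp := hd.setAverage_ball_le_mul_setAverage_five_mul hf0 x hρ hf
  refine ⟨⟨hB, hcomp.trans (by gcongr)⟩, ⟨?_, h5B⟩⟩
  rw [div_lt_iff₀ hc, mul_comm]
  exact hB.trans_le hcomp

end StoppingRadius

theorem calderon_zygmund_decomposition_general {X : Type*} [MetricSpace X] [MeasurableSpace X]
    [BorelSpace X]
    (μ : Measure X) (cμ : ℝ) (hdoub : IsDoubling μ cμ)
    (f : X → ℝ) (hf0 : ∀ x, 0 ≤ f x)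
    (hloc : ∀ (x : X) (r : ℝ), IntegrableOn f (Metric.ball x r) μ)
    (x₀ : X) (R : ℝ) (lam₀ : ℝ)
    (hlam : (μ (Metric.ball x₀ R)).toReal⁻¹ *
        ∫ x in Metric.ball x₀ (11 * R), f x ∂μ ≤ lam₀) :
    ∃ (S : Set ℕ) (c : ℕ → X) (r : ℕ → ℝ), IsCZBalls μ cμ f x₀ R lam₀ S c r := by
  have : Nonempty X := ⟨x₀⟩
  have : SigmaFinite μ := hdoub.sigmaFinite
  have : SecondCountableTopology X :=
    secondCountableTopology_of_measure_ball_pos (μ := μ) hdoub.measure_ball_pos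
  set E := {y ∈ ball x₀ R | ∃ ρ, IsStoppingRadius μ f lam₀ (2 * R) y ρ}
  choose! rad hrad using fun y (hy : y ∈ E) => hy.2
  obtain ⟨u, huE, hu, hdisj, hcov⟩ := exists_countable_pairwiseDisjoint_ball_subset_ball_five_mul
    hdoub.measure_ball_pos E rad (fun y hy => (hrad y hy).1) (2 * R) (fun y hy => (hrad y hy).2.1)
  obtain ⟨S, c, hinj, rfl⟩ := hu.exists_injOn_image_eq_nat
  have hcE : ∀ i ∈ S, c i ∈ E := fun i hi => huE (mem_image_of_mem c hi)
  have hbounds := fun i hi => (hrad _ (hcE i hi)).setAverage_bounds hdoub hf0 (hloc _ _)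
  refine ⟨S, c, fun i => rad (c i), fun i hi => (hrad _ (hcE i hi)).1, fun i hi => (hcE i hi).1,
    fun i hi => ?_, hinj.pairwiseDisjoint_image.1 hdisj, ?_, fun i hi => (hbounds i hi).1,
    fun i hi => (hbounds i hi).2⟩
  · refine ball_subset_ball' ?_
    linarith [(hrad _ (hcE i hi)).2.1, mem_ball.1 (hcE i hi).1]
  · filter_upwards [hdoub.ae_exists_isStoppingRadius hf0 hloc hlam] with x hx ⟨hxB, hxU⟩
    by_contra hlt
    have hxE : x ∈ E := ⟨hxB, hx hxB (not_le.1 hlt)⟩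
    obtain ⟨_, ⟨i, hi, rfl⟩, hsub⟩ := hcov x hxE
    exact hxU (mem_biUnion hi (hsub (mem_ball_self (hrad x hxE).1)))

/-- Calderón–Zygmund decomposition in a doubling metric measure space:
if `f ≥ 0` is locally integrable (integrable on every ball), `B₀ = B(x₀, R)` and
`λ₀ ≥ μ(B₀)⁻¹ ∫_{11B₀} f dμ`, then there is a countable family of Calderón–Zygmund
balls for `f` at level `λ₀` relative to `B₀`. -/
theorem calderon_zygmund_decomposition {X : Type*} [MetricSpace X] [MeasurableSpace X]
    [BorelSpace X]
    (μ : Measure X) (cμ : ℝ) (hcμ : 1 ≤ cμ) (hdoub : IsDoubling μ cμ)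
    (f : X → ℝ) (hf0 : ∀ x, 0 ≤ f x)
    (hloc : ∀ (x : X) (r : ℝ), IntegrableOn f (Metric.ball x r) μ)
    (x₀ : X) (R : ℝ) (hR : 0 < R) (lam₀ : ℝ)
    (hlam : (μ (Metric.ball x₀ R)).toReal⁻¹ *
        ∫ x in Metric.ball x₀ (11 * R), f x ∂μ ≤ lam₀) :
    ∃ (S : Set ℕ) (c : ℕ → X) (r : ℕ → ℝ), IsCZBalls μ cμ f x₀ R lam₀ S c r :=
  calderon_zygmund_decomposition_general μ cμ hdoub f hf0 hloc x₀ R lam₀ hlam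
end

section
/- Let $p>1$ and let $f(x)=x^{-1/p}$ on $Q_0=(0,2)\subset\mathbb{R}$. With the partition $Q_j=(2^{-j},2^{1-j})$ for $j=0,1,2,\dots$ of $Q_0$, the sum $\sum_{j=0}^\infty |Q_j|\left(\fint_{Q_j}|f-f_{Q_j}|\,dx\right)^p$ diverges; consequently $f$ does not satisfy the $JN_p(Q_0)$ condition for any finite constant. -/
open MeasureTheory Set ENNReal

/-!
The function `x^{-1/p}` is homogeneous of degree `-1/p`, so on `(a, 2a)` its mean oscillation
is `a^{-1/p}` times its mean oscillation on `(1, 2)`. Hence `|Q| (⨍_Q |f - f_Q|)^p` takes the same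
value `C` on every dyadic interval `Q = (2^{-j}, 2^{1-j})`, and `C > 0` because `f` is injective,
hence not a.e. constant, on `(1, 2)`. A series of infinitely many copies of `C` diverges, and the
dyadic intervals form an admissible partition of `(0, 2)` in the `JN_p` condition.
-/

/-- `f` satisfies the John–Nirenberg `JN_p` condition on the interval `Q₀ ⊆ ℝ` with
constant `K`: `∑ᵢ |Qᵢ| (⨍_{Qᵢ} |f - f_{Qᵢ}| dx)^p ≤ K^p` for every countable family
`{Qᵢ}` of subintervals of `Q₀` with pairwise disjoint interiors whose union is `Q₀`. -/
def IsJNpInterval (p : ℝ) (Q₀ : Set ℝ) (f : ℝ → ℝ) (K : ℝ) : Prop :=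
  ∀ (S : Set ℕ) (Q : ℕ → Set ℝ),
    (∀ i ∈ S, (Q i).OrdConnected ∧ Q i ⊆ Q₀) →
    (S.Pairwise fun i j => Disjoint (interior (Q i)) (interior (Q j))) →
    (⋃ i ∈ S, Q i) = Q₀ →
    ∑' i : S, volume (Q i.1) *
        ENNReal.ofReal ((⨍ x in Q i.1, |f x - ⨍ y in Q i.1, f y|) ^ p)
      ≤ ENNReal.ofReal (K ^ p)

section MeanOscillation

variable {α : Type*} [MeasurableSpace α]

noncomputable def meanOsc (μ : Measure α) (f : α → ℝ) (s : Set α) : ℝ :=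
  ⨍ x in s, |f x - ⨍ y in s, f y ∂μ| ∂μ

variable {μ : Measure α} {f : α → ℝ} {s : Set α}

lemma meanOsc_nonneg : 0 ≤ meanOsc μ f s := by
  rw [meanOsc, setAverage_eq, smul_eq_mul]
  exact mul_nonneg (inv_nonneg.2 measureReal_nonneg) (integral_nonneg fun _ => abs_nonneg _)

lemma setAverage_const_mul (k : ℝ) (g : α → ℝ) :
    ⨍ x in s, k * g x ∂μ = k * ⨍ x in s, g x ∂μ := by
  simp only [setAverage_eq, smul_eq_mul, integral_const_mul]
  ring

lemma meanOsc_const_mul (k : ℝ) : meanOsc μ (fun x => k * f x) s = |k| * meanOsc μ f s := by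
  simp only [meanOsc, setAverage_const_mul, ← mul_sub, abs_mul]

lemma meanOsc_congr_set {t : Set α} (h : s =ᵐ[μ] t) : meanOsc μ f s = meanOsc μ f t := by
  simp only [meanOsc, setAverage_congr h]

lemma meanOsc_congr_fun (hs : MeasurableSet s) {g : α → ℝ} (h : EqOn f g s) :
    meanOsc μ f s = meanOsc μ g s := by
  have hfg : ⨍ y in s, f y ∂μ = ⨍ y in s, g y ∂μ := setAverage_congr_fun hs (.of_forall h)
  simp only [meanOsc, hfg]
  exact setAverage_congr_fun hs (.of_forall fun x hx => by rw [h hx])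

lemma meanOsc_pos_of_injOn [NullSingletonClass μ] (hs₀ : μ s ≠ 0) (hs : μ s ≠ ∞)
    (hf : IntegrableOn f s μ) (hinj : InjOn f s) : 0 < meanOsc μ f s := by
  set m := ⨍ y in s, f y ∂μ
  have hlevel : (s ∩ f ⁻¹' {m}).Subsingleton := fun x hx y hy =>
    hinj hx.1 hy.1 (hx.2.trans hy.2.symm)
  have hsupp : μ (Function.support (fun x => |f x - m|) ∩ s) = μ s := by
    have : Function.support (fun x => |f x - m|) ∩ s = s \ (s ∩ f ⁻¹' {m}) := by
      ext x; simp [sub_eq_zero, and_comm]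
    rw [this, measure_sdiff_null (hlevel.measure_zero μ)]
  have hdev : IntegrableOn (fun x => |f x - m|) s μ := (hf.sub (integrableOn_const hs)).abs
  have hpos : 0 < ∫ x in s, |f x - m| ∂μ := by
    rw [setIntegral_pos_iff_support_of_nonneg_ae (.of_forall fun _ => abs_nonneg _) hdev, hsupp]
    exact pos_iff_ne_zero.2 hs₀
  rw [meanOsc, setAverage_eq, smul_eq_mul]
  exact mul_pos (inv_pos.2 (ENNReal.toReal_pos hs₀ hs)) hpos

end MeanOscillation

lemma setAverage_Ioo_comp_mul_left (g : ℝ → ℝ) {c a b : ℝ} (hc : 0 < c) (hab : a ≤ b) :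
    ⨍ x in Ioo (c * a) (c * b), g x = ⨍ t in Ioo a b, g (c * t) := by
  have hcab : c * a ≤ c * b := mul_le_mul_of_nonneg_left hab hc.le
  simp only [setAverage_eq, smul_eq_mul, Real.volume_real_Ioo_of_le hab,
    Real.volume_real_Ioo_of_le hcab, ← integral_Ioc_eq_integral_Ioo,
    ← intervalIntegral.integral_of_le hab, ← intervalIntegral.integral_of_le hcab,
    intervalIntegral.integral_comp_mul_left g hc.ne', ← mul_sub, mul_inv]
  ring

lemma meanOsc_Ioo_comp_mul_left (f : ℝ → ℝ) {c a b : ℝ} (hc : 0 < c) (hab : a ≤ b) :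
    meanOsc volume f (Ioo (c * a) (c * b)) = meanOsc volume (fun t => f (c * t)) (Ioo a b) := by
  simp only [meanOsc, setAverage_Ioo_comp_mul_left _ hc hab]

lemma meanOsc_rpow_Ioo_mul_left (r : ℝ) {c a b : ℝ} (hc : 0 < c) (ha : 0 ≤ a)
    (hab : a ≤ b) :
    meanOsc volume (· ^ r) (Ioo (c * a) (c * b)) = c ^ r * meanOsc volume (· ^ r) (Ioo a b) := by
  rw [meanOsc_Ioo_comp_mul_left _ hc hab,
    meanOsc_congr_fun measurableSet_Ioo (g := fun t => c ^ r * t ^ r)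
      fun t ht => Real.mul_rpow hc.le (ha.trans ht.1.le),
    meanOsc_const_mul, abs_of_pos (Real.rpow_pos_of_pos hc r)]

lemma meanOsc_rpow_Ioo_pos {r a b : ℝ} (hr : r ≠ 0) (ha : 0 < a) (hab : a < b) :
    0 < meanOsc volume (· ^ r) (Ioo a b) := by
  have hcont : ContinuousOn (· ^ r) (Icc a b) := fun x hx =>
    (Real.continuousAt_rpow_const x r (.inl (ha.trans_le hx.1).ne')).continuousWithinAt
  refine meanOsc_pos_of_injOn ?_ measure_Ioo_lt_top.ne
    (hcont.integrableOn_Icc.mono_set Ioo_subset_Icc_self)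
    ((Real.rpow_left_injOn hr).mono fun x hx => (ha.trans hx.1).le)
  simpa [Real.volume_Ioo] using hab

lemma mul_meanOsc_rpow_Ioo_two_mul {p a : ℝ} (hp : 0 < p) (ha : 0 < a) :
    a * meanOsc volume (· ^ (-(1 / p))) (Ioo a (2 * a)) ^ p =
      meanOsc volume (· ^ (-(1 / p))) (Ioo 1 2) ^ p := by
  have hscale := meanOsc_rpow_Ioo_mul_left (-(1 / p)) ha zero_le_one one_le_two
  rw [mul_one, mul_comm a 2] at hscale
  rw [hscale, Real.mul_rpow (Real.rpow_nonneg ha.le _) meanOsc_nonneg, ← Real.rpow_mul ha.le,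
    show -(1 / p) * p = -1 by field_simp, Real.rpow_neg_one, ← mul_assoc,
    mul_inv_cancel₀ ha.ne', one_mul]

lemma two_zpow_one_sub (j : ℤ) : (2 : ℝ) ^ (1 - j) = 2 * 2 ^ (-j) := by
  rw [sub_eq_add_neg, zpow_add₀ two_ne_zero, zpow_one]

open Function in
lemma pairwise_disjoint_Ico_two_zpow_neg :
    Pairwise (Disjoint on fun j : ℕ => Ico ((2 : ℝ) ^ (-(j : ℤ))) (2 ^ (1 - (j : ℤ)))) := by
  have hanti : Antitone fun j : ℕ => (2 : ℝ) ^ (1 - (j : ℤ)) := fun i j hij =>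
    zpow_le_zpow_right₀ one_le_two (by omega)
  simpa only [Order.succ_eq_add_one, Nat.cast_add, Nat.cast_one, sub_add_cancel_right]
    using hanti.pairwise_disjoint_on_Ico_succ

lemma iUnion_Ico_two_zpow_neg :
    ⋃ j : ℕ, Ico ((2 : ℝ) ^ (-(j : ℤ))) (2 ^ (1 - (j : ℤ))) = Ioo 0 2 := by
  apply Subset.antisymm
  · refine iUnion_subset fun j x hx =>
      ⟨(_root_.zpow_pos two_pos _).trans_le hx.1, hx.2.trans_le ?_⟩
    simpa using zpow_le_zpow_right₀ one_le_two (show 1 - (j : ℤ) ≤ 1 by omega)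
  · intro x hx
    obtain ⟨n, hn⟩ := exists_mem_Ico_zpow hx.1 one_lt_two
    have hn0 : n ≤ 0 := by
      by_contra! h
      have : (2 : ℝ) ^ (1 : ℤ) ≤ 2 ^ n := zpow_le_zpow_right₀ one_le_two h
      linarith [hn.1, hx.2, zpow_one (2 : ℝ)]
    refine mem_iUnion.2 ⟨n.natAbs, ?_⟩
    rwa [Int.natCast_natAbs, abs_of_nonpos hn0, neg_neg, sub_neg_eq_add, add_comm]

/-- For `p > 1` and `f(x) = x^{-1/p}` on `(0, 2)`, with the partition
`Q_j = (2^{-j}, 2^{1-j})`, `j = 0, 1, 2, …`, the sum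
`∑ⱼ |Q_j| (⨍_{Q_j} |f - f_{Q_j}| dx)^p` diverges; consequently `f` does not satisfy the
`JN_p((0,2))` condition with any finite constant. -/
theorem power_function_not_JNp (p : ℝ) (hp : 1 < p) :
    (¬ Summable fun j : ℕ =>
      (volume (Set.Ioo ((2 : ℝ) ^ (-(j : ℤ))) ((2 : ℝ) ^ (1 - (j : ℤ))))).toReal *
        (⨍ x in Set.Ioo ((2 : ℝ) ^ (-(j : ℤ))) ((2 : ℝ) ^ (1 - (j : ℤ))),
          |x ^ (-(1 / p)) -
            ⨍ y in Set.Ioo ((2 : ℝ) ^ (-(j : ℤ))) ((2 : ℝ) ^ (1 - (j : ℤ))),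
              y ^ (-(1 / p))|) ^ p) ∧
    ∀ K : ℝ, ¬ IsJNpInterval p (Set.Ioo 0 2) (fun x => x ^ (-(1 / p))) K := by
  have hp₀ : 0 < p := zero_lt_one.trans hp
  set f : ℝ → ℝ := (· ^ (-(1 / p)))
  set C := meanOsc volume f (Ioo 1 2) ^ p
  have hC : 0 < C := Real.rpow_pos_of_pos
    (meanOsc_rpow_Ioo_pos (neg_ne_zero.2 (one_div_pos.2 hp₀).ne') one_pos one_lt_two) p
  have hterm (j : ℕ) : (volume (Ioo ((2 : ℝ) ^ (-(j : ℤ))) (2 ^ (1 - (j : ℤ))))).toReal *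
      meanOsc volume f (Ioo (2 ^ (-(j : ℤ))) (2 ^ (1 - (j : ℤ)))) ^ p = C := by
    have ha : (0 : ℝ) < 2 ^ (-(j : ℤ)) := _root_.zpow_pos two_pos _
    rw [two_zpow_one_sub, Real.volume_Ioo, ENNReal.toReal_ofReal (by linarith), two_mul,
      add_sub_cancel_right, ← two_mul]
    exact mul_meanOsc_rpow_Ioo_two_mul hp₀ ha
  refine ⟨fun hsum => hC.ne' ((summable_const_iff C).1 (hsum.congr hterm)), fun K hK => ?_⟩
  -- Half-open pieces, since the open ones miss the points `2^{-j}` and do not cover `(0, 2)`.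
  set Q : ℕ → Set ℝ := fun j => Ico (2 ^ (-(j : ℤ))) (2 ^ (1 - (j : ℤ)))
  have hsummand (j : ℕ) :
      volume (Q j) * ENNReal.ofReal (meanOsc volume f (Q j) ^ p) = ENNReal.ofReal C := by
    rw [measure_congr Ioo_ae_eq_Ico.symm, meanOsc_congr_set Ioo_ae_eq_Ico.symm, ← hterm j,
      ENNReal.ofReal_mul ENNReal.toReal_nonneg, ENNReal.ofReal_toReal measure_Ioo_lt_top.ne]
  have hle := hK univ Q
    (fun j _ => ⟨ordConnected_Ico, iUnion_Ico_two_zpow_neg ▸ subset_iUnion Q j⟩)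
    (fun i _ j _ hij =>
      (pairwise_disjoint_Ico_two_zpow_neg hij).mono interior_subset interior_subset)
    (by simpa only [mem_univ, iUnion_true] using iUnion_Ico_two_zpow_neg)
  have : Infinite (univ : Set ℕ) := infinite_univ.to_subtype
  refine ENNReal.ofReal_ne_top (top_le_iff.1 (le_trans (le_of_eq ?_) hle))
  calc ⊤ = ∑' _ : (univ : Set ℕ), ENNReal.ofReal C :=
        (ENNReal.tsum_const_eq_top_of_ne_zero (by simpa using hC)).symm
    _ = _ := tsum_congr fun i => (hsummand i).symm
end
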